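/- Let 0 < p ≤ 1. Let {(w^k, λ^k, ζ^k, β^k)} ⊆ ℝⁿ × ℝ^r × ℝⁿ × ℝ^r be a sequence produced by the smoothing method: there are sequences μ_k > 0 with μ_k → 0 and ε̂_k ≥ 0 with ε̂_k → 0 such that for every k, (w^k, λ^k, ζ^k, β^k) is an ε̂_{k−1}-approximate KKT point of the smoothed one-level problem with smoothing parameter μ_{k−1}. Suppose Assumptions A1–A4 hold. Then every accumulation point (w*, λ*, ζ*, β*) of {(w^k, λ^k, ζ^k, β^k)} satisfies the SB-KKT conditions. -/

import Mathlib

/-!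
Along a subsequence the iterates converge, the residuals of the approximate KKT systems tend to
zero, and A1 with A2 gives `λ₁* > 0`. Where `w*ᵢ ≠ 0` the smoothed derivatives `(∇φ_μ)ᵢ` and
`wᵢ² (∇²φ_μ)ᵢᵢ` converge to `p sgn(w*ᵢ) |w*ᵢ|^{p-1}` and `p(p-1)|w*ᵢ|^p`, which gives (i)–(iii).
Where `w*ᵢ = 0`, stationarity keeps `wᵢ (wᵢ² + μ²)^{p/2-1}` convergent, so `t = wᵢ²/(wᵢ² + μ²)`
converges to some `T` with `(2 - p) T < 1` (`T = 0` if `p < 1`; A3 rules out `T = 1` if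
`p = 1`). Since `(∇²φ_μ)ᵢᵢ = p (wᵢ² + μ²)^{p/2-1} (1 - (2 - p) t) → ∞` while
`λ₁ (∇²φ_μ)ᵢᵢ ζᵢ` stays bounded, `ζ*ᵢ = 0`; and `wᵢ (∇²φ_μ)ᵢᵢ = (1 - (2 - p) t) (∇φ_μ)ᵢ` gives
`(∇φ_μ)ᵢ ζᵢ → 0`, so these coordinates drop out of (iii).
-/

open Filter Topology Finset

/-- Partial derivative `∂h/∂wᵢ (w)`. -/
noncomputable def pd {n : ℕ} (h : (Fin n → ℝ) → ℝ) (w : Fin n → ℝ) (i : Fin n) : ℝ :=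
  fderiv ℝ h w (Pi.single i 1)

/-- Second partial derivative `∂²h/∂wᵢ∂wⱼ (w)`. -/
noncomputable def pd2 {n : ℕ} (h : (Fin n → ℝ) → ℝ) (w : Fin n → ℝ) (i j : Fin n) : ℝ :=
  pd (fun x => pd h x j) w i

/-- `(∇φ_μ)ᵢ` at a scalar coordinate `x`: `p x (x² + μ²)^{p/2−1}`. -/
noncomputable def dphi (p μ x : ℝ) : ℝ := p * x * (x ^ 2 + μ ^ 2) ^ (p / 2 - 1)

/-- `(∇²φ_μ)ᵢᵢ` at a scalar coordinate `x`:
`p (x² + μ²)^{p/2−1} + p(p−2) x² (x² + μ²)^{p/2−2}`. -/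
noncomputable def d2phi (p μ x : ℝ) : ℝ :=
  p * (x ^ 2 + μ ^ 2) ^ (p / 2 - 1) + p * (p - 2) * x ^ 2 * (x ^ 2 + μ ^ 2) ^ (p / 2 - 2)

/-- `(w, λ, ζ, β)` is an `ε̂`-approximate KKT point of the smoothed one-level
problem with smoothing parameter `μ`. -/
def ApproxKKT {n r : ℕ} [NeZero r] (p : ℝ)
    (f : (Fin n → ℝ) → ℝ) (R : Fin r → (Fin n → ℝ) → ℝ)
    (G : (Fin n → ℝ) → (Fin r → ℝ) → ℝ)
    (w : Fin n → ℝ) (lam : Fin r → ℝ) (zeta : Fin n → ℝ) (beta : Fin r → ℝ)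
    (μ εhat : ℝ) : Prop :=
  ∃ (e1 : Fin n → ℝ) (e2 : ℝ) (e3 : Fin r → ℝ) (e4 : Fin n → ℝ) (e5 : ℝ),
    (∀ i, pd f w i
        + ((∑ j, pd2 (fun x => G x lam) w i j * zeta j)
          + lam 0 * d2phi p μ (w i) * zeta i) = e1 i) ∧
    ((∑ i, dphi p μ (w i) * zeta i) - beta 0 = e2) ∧
    (∀ i : Fin r, i ≠ 0 → (∑ j, pd (R i) w j * zeta j) - beta i = e3 i) ∧
    (∀ i, pd (fun x => G x lam) w i + lam 0 * dphi p μ (w i) = e4 i) ∧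
    (∀ i, 0 ≤ lam i) ∧ (∀ i, 0 ≤ beta i) ∧ ((∑ i, lam i * beta i) = e5) ∧
    Real.sqrt ((∑ i, (e1 i) ^ 2) + e2 ^ 2
        + (∑ i ∈ univ.filter (fun i : Fin r => i ≠ 0), (e3 i) ^ 2)
        + (∑ i, (e4 i) ^ 2) + e5 ^ 2) ≤ εhat

/-- The constraint function `Φᵢ(w, λ) = ∂G/∂wᵢ(w, λ̄) + p sgn(wᵢ) λ₁ |wᵢ|^{p−1}`
seen as a function on `ℝⁿ × ℝʳ`. -/
noncomputable def PhiC {n r : ℕ} [NeZero r] (p : ℝ)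
    (G : (Fin n → ℝ) → (Fin r → ℝ) → ℝ) (i : Fin n)
    (x : (Fin n → ℝ) × (Fin r → ℝ)) : ℝ :=
  pd (fun w => G w x.2) x.1 i + p * Real.sign (x.1 i) * x.2 0 * |x.1 i| ^ (p - 1)

/-- The gradient of `Φᵢ` with respect to `(w, λ)`, written blockwise. -/
noncomputable def gradPhiC {n r : ℕ} [NeZero r] (p : ℝ)
    (G : (Fin n → ℝ) → (Fin r → ℝ) → ℝ) (i : Fin n)
    (x : (Fin n → ℝ) × (Fin r → ℝ)) : (Fin n → ℝ) × (Fin r → ℝ) :=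
  (fun j => fderiv ℝ (PhiC p G i) x (Pi.single j 1, 0),
   fun j => fderiv ℝ (PhiC p G i) x (0, Pi.single j 1))

/-- The LICQ (Assumption A4) at `(w*, λ*)`: the gradients `∇Φᵢ(w*, λ*)` for
`i ∉ I(w*)`, together with the coordinate vectors `eᵢ^{(w)}` for `i ∈ I(w*)` and
`eᵢ^{(λ)}` for `i ∈ I(λ*)`, are linearly independent in `ℝⁿ × ℝʳ`. -/
def LICQ {n r : ℕ} [NeZero r] (p : ℝ)
    (G : (Fin n → ℝ) → (Fin r → ℝ) → ℝ)
    (wstar : Fin n → ℝ) (lamstar : Fin r → ℝ) : Prop :=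
  LinearIndependent ℝ
    (Sum.elim (fun i : {i : Fin n // wstar i ≠ 0} => gradPhiC p G i.1 (wstar, lamstar))
      (Sum.elim
        (fun i : {i : Fin n // wstar i = 0} =>
          ((Pi.single i.1 1, 0) : (Fin n → ℝ) × (Fin r → ℝ)))
        (fun j : {j : Fin r // lamstar j = 0} =>
          ((0, Pi.single j.1 1) : (Fin n → ℝ) × (Fin r → ℝ)))))

theorem Real.sign_mul_abs (a : ℝ) : Real.sign a * |a| = a := by
  rcases lt_trichotomy a 0 with h | rfl | h
  · rw [Real.sign_of_neg h, abs_of_neg h]; ring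
  · simp
  · rw [Real.sign_of_pos h, abs_of_pos h]; ring

theorem Real.self_mul_sign (a : ℝ) : a * Real.sign a = |a| := by
  rcases lt_trichotomy a 0 with h | rfl | h
  · rw [Real.sign_of_neg h, abs_of_neg h]; ring
  · simp
  · rw [Real.sign_of_pos h, abs_of_pos h]; ring

theorem abs_mul_abs_rpow_sub_one {a : ℝ} (ha : a ≠ 0) (p : ℝ) : |a| * |a| ^ (p - 1) = |a| ^ p := by
  rw [Real.rpow_sub_one (abs_ne_zero.2 ha)]
  field_simp

theorem Filter.Tendsto.of_mul_left {ι K : Type*} [Field K] [TopologicalSpace K] [T1Space K]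
    [ContinuousMul K] [ContinuousInv₀ K] {l : Filter ι} {c u : ι → K} {c₀ L : K}
    (hcu : Tendsto (fun k => c k * u k) l (𝓝 L)) (hc : Tendsto c l (𝓝 c₀)) (hc₀ : c₀ ≠ 0) :
    Tendsto u l (𝓝 (L / c₀)) := by
  refine (hcu.div hc hc₀).congr' ?_
  filter_upwards [hc.eventually_ne hc₀] with k hk
  simp only [Pi.div_apply]
  field_simp

theorem liminf_le_of_tendsto_comp {α β γ : Type*} [ConditionallyCompleteLinearOrder α]
    [TopologicalSpace α] [OrderTopology α] [DenselyOrdered α] {f : Filter β} {g : Filter γ}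
    [g.NeBot] {u : β → α} {ψ : γ → β} {L : α} (hu : IsBoundedUnder (· ≥ ·) f u)
    (hψ : Tendsto ψ g f) (hL : Tendsto (u ∘ ψ) g (𝓝 L)) : liminf u f ≤ L :=
  le_of_forall_lt_imp_le_of_dense fun _ hb =>
    ge_of_tendsto hL (hψ.eventually (eventually_lt_of_lt_liminf hb hu) |>.mono fun _ h => h.le)

section Smoothing

variable {p : ℝ}

theorem rpow_sq_eq_abs_rpow (a e : ℝ) : (a ^ 2) ^ e = |a| ^ (2 * e) := by
  rw [← sq_abs, ← Real.rpow_natCast, ← Real.rpow_mul (abs_nonneg a)]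
  norm_num

theorem dphi_zero (p a : ℝ) : dphi p 0 a = p * Real.sign a * |a| ^ (p - 1) := by
  rcases eq_or_ne a 0 with rfl | ha
  · simp [dphi]
  have hpow : |a| ^ (p - 1) = |a| * |a| ^ (p - 2) := by
    rw [show p - 1 = 1 + (p - 2) by ring, Real.rpow_add (abs_pos.2 ha), Real.rpow_one]
  rw [dphi, zero_pow two_ne_zero, add_zero, rpow_sq_eq_abs_rpow, hpow,
    show 2 * (p / 2 - 1) = p - 2 by ring]
  linear_combination -(p * |a| ^ (p - 2)) * Real.sign_mul_abs a

theorem sq_mul_d2phi_zero {a : ℝ} (ha : a ≠ 0) (p : ℝ) :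
    a ^ 2 * d2phi p 0 a = p * (p - 1) * |a| ^ p := by
  have hb : 0 < |a| := abs_pos.2 ha
  have h2 : a ^ 2 = |a| ^ (2 : ℝ) := by rw [Real.rpow_two, sq_abs]
  rw [d2phi, zero_pow two_ne_zero, add_zero, rpow_sq_eq_abs_rpow, rpow_sq_eq_abs_rpow,
    h2, show 2 * (p / 2 - 1) = p - 2 by ring, show 2 * (p / 2 - 2) = p - 4 by ring]
  have k1 : |a| ^ (2 : ℝ) * |a| ^ (p - 2) = |a| ^ p := by
    rw [← Real.rpow_add hb]; ring_nf
  have k2 : |a| ^ (2 : ℝ) * |a| ^ (2 : ℝ) * |a| ^ (p - 4) = |a| ^ p := by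
    rw [← Real.rpow_add hb, ← Real.rpow_add hb]; ring_nf
  linear_combination p * k1 + p * (p - 2) * k2

variable {ι : Type*} {l : Filter ι} {x μ : ι → ℝ} {a : ℝ}

theorem tendsto_sq_add_sq (hx : Tendsto x l (𝓝 a)) (hμ : Tendsto μ l (𝓝 0)) :
    Tendsto (fun k => x k ^ 2 + μ k ^ 2) l (𝓝 (a ^ 2 + 0 ^ 2)) :=
  (hx.pow 2).add (hμ.pow 2)

theorem tendsto_dphi (hx : Tendsto x l (𝓝 a)) (hμ : Tendsto μ l (𝓝 0)) (ha : a ≠ 0) :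
    Tendsto (fun k => dphi p (μ k) (x k)) l (𝓝 (p * Real.sign a * |a| ^ (p - 1))) := by
  rw [← dphi_zero]
  exact (tendsto_const_nhds.mul hx).mul
    ((tendsto_sq_add_sq hx hμ).rpow_const (Or.inl (by positivity)))

theorem tendsto_sq_mul_d2phi (hx : Tendsto x l (𝓝 a)) (hμ : Tendsto μ l (𝓝 0)) (ha : a ≠ 0) :
    Tendsto (fun k => x k ^ 2 * d2phi p (μ k) (x k)) l (𝓝 (p * (p - 1) * |a| ^ p)) := by
  have hs := (tendsto_sq_add_sq hx hμ).rpow_const (p := p / 2 - 1) (Or.inl (by positivity))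
  have hs' := (tendsto_sq_add_sq hx hμ).rpow_const (p := p / 2 - 2) (Or.inl (by positivity))
  rw [← sq_mul_d2phi_zero ha]
  exact (hx.pow 2).mul ((tendsto_const_nhds.mul hs).add
    ((tendsto_const_nhds.mul (hx.pow 2)).mul hs'))

end Smoothing

section PartialDerivatives

variable {n : ℕ}

theorem contDiff_pd {h : (Fin n → ℝ) → ℝ} {k m : WithTop ℕ∞} (hh : ContDiff ℝ k h)
    (hmk : m + 1 ≤ k) (j : Fin n) : ContDiff ℝ m (fun x => pd h x j) :=
  (hh.fderiv_right hmk).clm_apply contDiff_const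

theorem continuous_pd {h : (Fin n → ℝ) → ℝ} {k : WithTop ℕ∞} (hh : ContDiff ℝ k h) (hk : k ≠ 0)
    (j : Fin n) : Continuous (fun x => pd h x j) :=
  (hh.continuous_fderiv hk).clm_apply continuous_const

theorem pd_add_sum_mul {ι : Type*} (S : Finset ι) (c : ι → ℝ) {g : (Fin n → ℝ) → ℝ}
    {R : ι → (Fin n → ℝ) → ℝ} {w : Fin n → ℝ} (hg : DifferentiableAt ℝ g w)
    (hR : ∀ t, DifferentiableAt ℝ (R t) w) (i : Fin n) :
    pd (fun x => g x + ∑ t ∈ S, c t * R t x) w i = pd g w i + ∑ t ∈ S, c t * pd (R t) w i := by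
  have H : HasFDerivAt (fun x => g x + ∑ t ∈ S, c t * R t x)
      (fderiv ℝ g w + ∑ t ∈ S, c t • fderiv ℝ (R t) w) w :=
    hg.hasFDerivAt.fun_add (.fun_sum fun t _ => (hR t).hasFDerivAt.const_mul (c t))
  simp [pd, H.fderiv]

variable {r : ℕ} [NeZero r] {g : (Fin n → ℝ) → ℝ} {R : Fin r → (Fin n → ℝ) → ℝ}
  {G : (Fin n → ℝ) → (Fin r → ℝ) → ℝ}

theorem pd_G_eq (hg : ContDiff ℝ 2 g) (hR : ∀ t, ContDiff ℝ 2 (R t))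
    (hG : ∀ w lam, G w lam = g w + ∑ t ∈ univ.filter (fun t : Fin r => t ≠ 0), lam t * R t w)
    (lam : Fin r → ℝ) (w : Fin n → ℝ) (i : Fin n) :
    pd (fun x => G x lam) w i
      = pd g w i + ∑ t ∈ univ.filter (fun t : Fin r => t ≠ 0), lam t * pd (R t) w i := by
  simp only [hG]
  exact pd_add_sum_mul _ _ (hg.differentiable two_ne_zero w)
    (fun t => (hR t).differentiable two_ne_zero w) i

theorem pd2_G_eq (hg : ContDiff ℝ 2 g) (hR : ∀ t, ContDiff ℝ 2 (R t))
    (hG : ∀ w lam, G w lam = g w + ∑ t ∈ univ.filter (fun t : Fin r => t ≠ 0), lam t * R t w)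
    (lam : Fin r → ℝ) (w : Fin n → ℝ) (i j : Fin n) :
    pd2 (fun x => G x lam) w i j
      = pd2 g w i j + ∑ t ∈ univ.filter (fun t : Fin r => t ≠ 0), lam t * pd2 (R t) w i j := by
  simp only [pd2, pd_G_eq hg hR hG]
  exact pd_add_sum_mul _ _ ((contDiff_pd hg (m := 1) (by norm_num) j).differentiable one_ne_zero w)
    (fun t => (contDiff_pd (hR t) (m := 1) (by norm_num) j).differentiable one_ne_zero w) i

theorem continuous_pd_G (hg : ContDiff ℝ 2 g) (hR : ∀ t, ContDiff ℝ 2 (R t))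
    (hG : ∀ w lam, G w lam = g w + ∑ t ∈ univ.filter (fun t : Fin r => t ≠ 0), lam t * R t w)
    (i : Fin n) :
    Continuous (fun q : (Fin n → ℝ) × (Fin r → ℝ) => pd (fun x => G x q.2) q.1 i) := by
  simp only [pd_G_eq hg hR hG]
  have := continuous_pd hg two_ne_zero i
  have := fun t => continuous_pd (hR t) two_ne_zero i
  fun_prop

theorem continuous_pd2_G (hg : ContDiff ℝ 2 g) (hR : ∀ t, ContDiff ℝ 2 (R t))
    (hG : ∀ w lam, G w lam = g w + ∑ t ∈ univ.filter (fun t : Fin r => t ≠ 0), lam t * R t w)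
    (i j : Fin n) :
    Continuous (fun q : (Fin n → ℝ) × (Fin r → ℝ) => pd2 (fun x => G x q.2) q.1 i j) := by
  simp only [pd2_G_eq hg hR hG]
  have : Continuous fun x => pd2 g x i j :=
    continuous_pd (contDiff_pd hg (m := 1) (by norm_num) j) one_ne_zero i
  have : ∀ t, Continuous fun x => pd2 (R t) x i j :=
    fun t => continuous_pd (contDiff_pd (hR t) (m := 1) (by norm_num) j) one_ne_zero i
  fun_prop

end PartialDerivatives

section VanishingCoordinate

variable {p : ℝ}

theorem d2phi_eq {μ : ℝ} (hμ : μ ≠ 0) (x : ℝ) :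
    d2phi p μ x
      = p * (x ^ 2 + μ ^ 2) ^ (p / 2 - 1) * (1 - (2 - p) * (x ^ 2 / (x ^ 2 + μ ^ 2))) := by
  have hs : 0 < x ^ 2 + μ ^ 2 := by positivity
  rw [d2phi, show p / 2 - 2 = (p / 2 - 1) - 1 by ring, Real.rpow_sub_one hs.ne' (p / 2 - 1)]
  generalize (x ^ 2 + μ ^ 2) ^ (p / 2 - 1) = E
  field_simp
  ring

theorem mul_d2phi_eq {μ : ℝ} (hμ : μ ≠ 0) (x : ℝ) :
    x * d2phi p μ x = (1 - (2 - p) * (x ^ 2 / (x ^ 2 + μ ^ 2))) * dphi p μ x := by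
  rw [d2phi_eq hμ, dphi]
  ring

theorem sq_div_sq_add_sq_eq {μ : ℝ} (hμ : μ ≠ 0) (x : ℝ) :
    x ^ 2 / (x ^ 2 + μ ^ 2)
      = (x * (x ^ 2 + μ ^ 2) ^ (p / 2 - 1)) ^ 2 * (x ^ 2 + μ ^ 2) ^ (1 - p) := by
  have hs : 0 < x ^ 2 + μ ^ 2 := by positivity
  rw [mul_pow, ← Real.rpow_mul_natCast hs.le, mul_assoc, ← Real.rpow_add hs]
  rw [show (p / 2 - 1) * (2 : ℕ) + (1 - p) = -1 by push_cast; ring, Real.rpow_neg_one,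
    div_eq_mul_inv]

variable {ι : Type*} {l : Filter ι} {x μ : ι → ℝ}

theorem tendsto_rpow_sq_add_sq_zero (hx : Tendsto x l (𝓝 0)) (hμ : Tendsto μ l (𝓝 0))
    {e : ℝ} (he : 0 < e) : Tendsto (fun k => (x k ^ 2 + μ k ^ 2) ^ e) l (𝓝 0) := by
  simpa [Real.zero_rpow he.ne'] using (tendsto_sq_add_sq hx hμ).rpow_const (Or.inr he.le)

theorem tendsto_rpow_sq_add_sq_atTop (hμne : ∀ k, μ k ≠ 0) (hx : Tendsto x l (𝓝 0))
    (hμ : Tendsto μ l (𝓝 0)) {e : ℝ} (he : e < 0) :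
    Tendsto (fun k => (x k ^ 2 + μ k ^ 2) ^ e) l atTop := by
  refine (tendsto_rpow_neg_nhdsGT_zero he).comp (tendsto_nhdsWithin_iff.2 ⟨?_, ?_⟩)
  · simpa using tendsto_sq_add_sq hx hμ
  · exact Eventually.of_forall fun k => Set.mem_Ioi.2 (by have := hμne k; positivity)

theorem exists_tendsto_sq_div [l.NeBot] (hp1 : p ≤ 1) (hμne : ∀ k, μ k ≠ 0)
    (hx : Tendsto x l (𝓝 0)) (hμ : Tendsto μ l (𝓝 0)) {A : ℝ}
    (hA : Tendsto (fun k => x k * (x k ^ 2 + μ k ^ 2) ^ (p / 2 - 1)) l (𝓝 A))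
    (hA1 : p = 1 → A ^ 2 ≠ 1) :
    ∃ T, Tendsto (fun k => x k ^ 2 / (x k ^ 2 + μ k ^ 2)) l (𝓝 T) ∧ (2 - p) * T < 1 := by
  simp only [sq_div_sq_add_sq_eq (p := p) (hμne _)]
  rcases hp1.lt_or_eq with hlt | rfl
  · refine ⟨0, ?_, by norm_num⟩
    simpa using (hA.pow 2).mul (tendsto_rpow_sq_add_sq_zero hx hμ (sub_pos.2 hlt))
  · have hT : Tendsto (fun k => (x k * (x k ^ 2 + μ k ^ 2) ^ (1 / 2 - 1 : ℝ)) ^ 2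
        * (x k ^ 2 + μ k ^ 2) ^ (1 - 1 : ℝ)) l (𝓝 (A ^ 2)) := by
      simpa using hA.pow 2
    have hle : A ^ 2 ≤ 1 := le_of_tendsto' hT fun k => by
      rw [← sq_div_sq_add_sq_eq (hμne k)]
      exact div_le_one_of_le₀ (le_add_of_nonneg_right (sq_nonneg _)) (by positivity)
    exact ⟨A ^ 2, hT, by linarith [lt_of_le_of_ne hle (hA1 rfl)]⟩

theorem tendsto_d2phi_atTop (hp : 0 < p) (hp2 : p < 2) (hμne : ∀ k, μ k ≠ 0)
    (hx : Tendsto x l (𝓝 0)) (hμ : Tendsto μ l (𝓝 0)) {T : ℝ}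
    (hT : Tendsto (fun k => x k ^ 2 / (x k ^ 2 + μ k ^ 2)) l (𝓝 T)) (hT1 : (2 - p) * T < 1) :
    Tendsto (fun k => d2phi p (μ k) (x k)) l atTop := by
  have h := (tendsto_rpow_sq_add_sq_atTop hμne hx hμ (by linarith : p / 2 - 1 < 0)).atTop_mul_pos
    (mul_pos hp (sub_pos.2 hT1)) (tendsto_const_nhds.mul (tendsto_const_nhds.sub
      (tendsto_const_nhds.mul hT)))
  exact h.congr fun k => by rw [d2phi_eq (hμne k)]; ring

theorem eq_zero_and_tendsto_dphi_mul_of_tendsto_zero [l.NeBot] (hp : 0 < p) (hp1 : p ≤ 1)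
    (hμne : ∀ k, μ k ≠ 0) (hx : Tendsto x l (𝓝 0)) (hμ : Tendsto μ l (𝓝 0))
    {c ζ D B : ι → ℝ} {c₀ ζ₀ D₀ B₀ : ℝ} (hc : Tendsto c l (𝓝 c₀)) (hc₀ : 0 < c₀)
    (hζ : Tendsto ζ l (𝓝 ζ₀)) (hD : Tendsto D l (𝓝 D₀)) (hB : Tendsto B l (𝓝 B₀))
    (hstat : Tendsto (fun k => D k + c k * dphi p (μ k) (x k)) l (𝓝 0))
    (hadj : Tendsto (fun k => B k + c k * d2phi p (μ k) (x k) * ζ k) l (𝓝 0))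
    (hA3 : p = 1 → c₀ ≠ |D₀|) :
    ζ₀ = 0 ∧ Tendsto (fun k => dphi p (μ k) (x k) * ζ k) l (𝓝 0) := by
  have hcdphi : Tendsto (fun k => p * c k * (x k * (x k ^ 2 + μ k ^ 2) ^ (p / 2 - 1))) l
      (𝓝 (-D₀)) := by
    simpa [dphi, mul_comm, mul_left_comm, mul_assoc] using hstat.sub hD
  obtain ⟨T, hT, hT1⟩ := exists_tendsto_sq_div hp1 hμne hx hμ
    (hcdphi.of_mul_left (tendsto_const_nhds.mul hc) (by positivity)) fun hp1 hA => hA3 hp1 <| by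
      subst hp1
      rw [div_pow, div_eq_one_iff_eq (by positivity), one_mul, sq_eq_sq_iff_abs_eq_abs,
        abs_neg, abs_of_pos hc₀] at hA
      exact hA.symm
  have hd2 := tendsto_d2phi_atTop hp (by linarith) hμne hx hμ hT hT1
  have hd2ζ : Tendsto (fun k => d2phi p (μ k) (x k) * ζ k) l (𝓝 (-B₀ / c₀)) :=
    Tendsto.of_mul_left (by simpa [mul_assoc] using hadj.sub hB) hc hc₀.ne'
  have hζ₀ : ζ₀ = 0 := by
    refine tendsto_nhds_unique hζ ?_
    have h := hd2ζ.mul hd2.inv_tendsto_atTop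
    rw [mul_zero] at h
    refine h.congr' ?_
    filter_upwards [hd2.eventually_gt_atTop 0] with k hk
    simp only [Pi.inv_apply]
    field_simp
  refine ⟨hζ₀, ?_⟩
  have hfactor : Tendsto (fun k => 1 - (2 - p) * (x k ^ 2 / (x k ^ 2 + μ k ^ 2))) l
      (𝓝 (1 - (2 - p) * T)) := tendsto_const_nhds.sub (tendsto_const_nhds.mul hT)
  have h := Tendsto.of_mul_left (u := fun k => dphi p (μ k) (x k) * ζ k)
    ((hx.mul hd2ζ).congr fun k => by rw [← mul_assoc, mul_d2phi_eq (hμne k), mul_assoc])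
    hfactor (by linarith)
  simpa using h

end VanishingCoordinate

section CoordinateLimits

variable {ι : Type*} {l : Filter ι} [l.NeBot] {p : ℝ} {x μ c ζ D B : ι → ℝ} {a c₀ ζ₀ D₀ B₀ : ℝ}

theorem mul_add_rpow_eq_zero_of_tendsto (hp : 0 < p) (hx : Tendsto x l (𝓝 a))
    (hμ : Tendsto μ l (𝓝 0)) (hc : Tendsto c l (𝓝 c₀)) (hD : Tendsto D l (𝓝 D₀))
    (hstat : Tendsto (fun k => D k + c k * dphi p (μ k) (x k)) l (𝓝 0)) :
    a * D₀ + p * c₀ * |a| ^ p = 0 := by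
  rcases eq_or_ne a 0 with rfl | ha
  · simp [Real.zero_rpow hp.ne']
  have h := tendsto_nhds_unique (hD.add (hc.mul (tendsto_dphi hx hμ ha))) hstat
  linear_combination a * h - p * c₀ * |a| ^ (p - 1) * Real.self_mul_sign a
    - p * c₀ * abs_mul_abs_rpow_sub_one ha p

theorem sq_mul_add_rpow_eq_zero_of_tendsto (hp : 0 < p) (hx : Tendsto x l (𝓝 a))
    (hμ : Tendsto μ l (𝓝 0)) (hc : Tendsto c l (𝓝 c₀)) (hζ : Tendsto ζ l (𝓝 ζ₀))
    (hB : Tendsto B l (𝓝 B₀))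
    (hadj : Tendsto (fun k => B k + c k * d2phi p (μ k) (x k) * ζ k) l (𝓝 0)) :
    a ^ 2 * B₀ + c₀ * p * (p - 1) * |a| ^ p * ζ₀ = 0 := by
  rcases eq_or_ne a 0 with rfl | ha
  · simp [Real.zero_rpow hp.ne']
  have h := ((hx.pow 2).mul hB).add ((hc.mul (tendsto_sq_mul_d2phi (p := p) hx hμ ha)).mul hζ)
  have h0 : Tendsto (fun k => x k ^ 2 * (B k + c k * d2phi p (μ k) (x k) * ζ k)) l (𝓝 0) := by
    simpa using (hx.pow 2).mul hadj
  linear_combination tendsto_nhds_unique (h.congr fun k => by ring) h0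

end CoordinateLimits

section KKT

variable {n r : ℕ} [NeZero r] {p : ℝ} {f g : (Fin n → ℝ) → ℝ} {R : Fin r → (Fin n → ℝ) → ℝ}
  {G : (Fin n → ℝ) → (Fin r → ℝ) → ℝ}

theorem ApproxKKT.abs_residual_le {w zeta : Fin n → ℝ} {lam beta : Fin r → ℝ} {μ ε : ℝ}
    (h : ApproxKKT p f R G w lam zeta beta μ ε) :
    (∀ i, |pd f w i + ∑ j, pd2 (fun x => G x lam) w i j * zeta j
        + lam 0 * d2phi p μ (w i) * zeta i| ≤ ε) ∧
    |(∑ i, dphi p μ (w i) * zeta i) - beta 0| ≤ ε ∧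
    (∀ i : Fin r, i ≠ 0 → |(∑ j, pd (R i) w j * zeta j) - beta i| ≤ ε) ∧
    (∀ i, |pd (fun x => G x lam) w i + lam 0 * dphi p μ (w i)| ≤ ε) ∧
    (∀ i, 0 ≤ lam i) ∧ (∀ i, 0 ≤ beta i) ∧ |∑ i, lam i * beta i| ≤ ε := by
  obtain ⟨e1, e2, e3, e4, e5, h1, h2, h3, h4, hlam, hbeta, h5, hnorm⟩ := h
  have hle {a : ℝ} (ha : a ^ 2 ≤ (∑ i, e1 i ^ 2) + e2 ^ 2
      + (∑ i ∈ univ.filter (fun i : Fin r => i ≠ 0), e3 i ^ 2) + (∑ i, e4 i ^ 2) + e5 ^ 2) :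
      |a| ≤ ε :=
    (Real.abs_le_sqrt ha).trans hnorm
  have n1 : 0 ≤ ∑ i, e1 i ^ 2 := sum_nonneg fun _ _ => sq_nonneg _
  have n3 : 0 ≤ ∑ i ∈ univ.filter (fun i : Fin r => i ≠ 0), e3 i ^ 2 :=
    sum_nonneg fun _ _ => sq_nonneg _
  have n4 : 0 ≤ ∑ i, e4 i ^ 2 := sum_nonneg fun _ _ => sq_nonneg _
  have n2 := sq_nonneg e2
  have n5 := sq_nonneg e5
  refine ⟨fun i => ?_, ?_, fun i hi => ?_, fun i => ?_, hlam, hbeta, ?_⟩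
  · rw [add_assoc, h1 i]
    exact hle (by linarith [single_le_sum (fun j _ => sq_nonneg (e1 j)) (mem_univ i)])
  · exact h2 ▸ hle (by linarith)
  · have := single_le_sum (s := univ.filter fun j : Fin r => j ≠ 0)
      (fun j _ => sq_nonneg (e3 j)) (mem_filter.2 ⟨mem_univ i, hi⟩)
    rw [h3 i hi]
    exact hle (by linarith)
  · rw [h4 i]
    exact hle (by linarith [single_le_sum (fun j _ => sq_nonneg (e4 j)) (mem_univ i)])
  · exact h5 ▸ hle (by linarith)

def SBKKT (p : ℝ) (f : (Fin n → ℝ) → ℝ) (R : Fin r → (Fin n → ℝ) → ℝ)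
    (G : (Fin n → ℝ) → (Fin r → ℝ) → ℝ) (wstar : Fin n → ℝ) (lamstar : Fin r → ℝ)
    (zetastar : Fin n → ℝ) (betastar : Fin r → ℝ) : Prop :=
  (∀ i, (wstar i) ^ 2 * pd f wstar i
      + ((∑ j, (wstar i) ^ 2 * pd2 (fun x => G x lamstar) wstar i j * zetastar j)
        + lamstar 0 * p * (p - 1) * |wstar i| ^ p * zetastar i) = 0) ∧
  (∀ i, wstar i * pd (fun x => G x lamstar) wstar i + p * lamstar 0 * |wstar i| ^ p = 0) ∧
  ((p * ∑ i ∈ univ.filter (fun i => wstar i ≠ 0),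
      Real.sign (wstar i) * |wstar i| ^ (p - 1) * zetastar i) = betastar 0) ∧
  (∀ i, wstar i = 0 → zetastar i = 0) ∧
  (∀ i : Fin r, i ≠ 0 → (∑ j, pd (R i) wstar j * zetastar j) = betastar i) ∧
  ((∀ i, 0 ≤ lamstar i) ∧ (∀ i, 0 ≤ betastar i) ∧ (∑ i, lamstar i * betastar i) = 0)

theorem sbkkt_of_tendsto {ι : Type*} {l : Filter ι} [l.NeBot] (hp : 0 < p) (hp1 : p ≤ 1)
    (hfC : ContDiff ℝ 1 f) (hgC : ContDiff ℝ 2 g) (hRC : ∀ i, ContDiff ℝ 2 (R i))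
    (hG : ∀ w lam, G w lam = g w + ∑ i ∈ univ.filter (fun i : Fin r => i ≠ 0), lam i * R i w)
    {w zeta : ι → Fin n → ℝ} {lam beta : ι → Fin r → ℝ} {μ ε : ι → ℝ}
    {wstar zetastar : Fin n → ℝ} {lamstar betastar : Fin r → ℝ}
    (hμne : ∀ k, μ k ≠ 0) (hμ : Tendsto μ l (𝓝 0)) (hε : Tendsto ε l (𝓝 0))
    (hKKT : ∀ k, ApproxKKT p f R G (w k) (lam k) (zeta k) (beta k) (μ k) (ε k))
    (hw : Tendsto w l (𝓝 wstar)) (hlam : Tendsto lam l (𝓝 lamstar))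
    (hzeta : Tendsto zeta l (𝓝 zetastar)) (hbeta : Tendsto beta l (𝓝 betastar))
    (hlam0 : 0 < lamstar 0)
    (hA3 : p = 1 → ∀ i, wstar i = 0 → lamstar 0 ≠ |pd (fun x => G x lamstar) wstar i|) :
    SBKKT p f R G wstar lamstar zetastar betastar := by
  have hres := fun k => (hKKT k).abs_residual_le
  have hzero {u : ι → ℝ} (hu : ∀ k, |u k| ≤ ε k) : Tendsto u l (𝓝 0) :=
    squeeze_zero_norm (fun k => (Real.norm_eq_abs _).trans_le (hu k)) hε
  have hwi := tendsto_pi_nhds.1 hw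
  have hlami := tendsto_pi_nhds.1 hlam
  have hzetai := tendsto_pi_nhds.1 hzeta
  have hbetai := tendsto_pi_nhds.1 hbeta
  have hD i : Tendsto (fun k => pd (fun x => G x (lam k)) (w k) i) l
      (𝓝 (pd (fun x => G x lamstar) wstar i)) :=
    ((continuous_pd_G hgC hRC hG i).tendsto _).comp (hw.prodMk_nhds hlam)
  have hB i : Tendsto (fun k => pd f (w k) i + ∑ j, pd2 (fun x => G x (lam k)) (w k) i j * zeta k j)
      l (𝓝 (pd f wstar i + ∑ j, pd2 (fun x => G x lamstar) wstar i j * zetastar j)) :=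
    (((continuous_pd hfC one_ne_zero i).tendsto _).comp hw).add (tendsto_finsetSum _ fun j _ =>
      (((continuous_pd2_G hgC hRC hG i j).tendsto _).comp (hw.prodMk_nhds hlam)).mul (hzetai j))
  have hstat i := hzero fun k => (hres k).2.2.2.1 i
  have hadj i := hzero fun k => (hres k).1 i
  have hvanish i (hi : wstar i = 0) :=
    eq_zero_and_tendsto_dphi_mul_of_tendsto_zero hp hp1 hμne (hi ▸ hwi i) hμ (hlami 0) hlam0
      (hzetai i) (hD i) (hB i) (hstat i) (hadj i) fun h1 => hA3 h1 i hi
  refine ⟨fun i => ?_, fun i => ?_, ?_, fun i hi => (hvanish i hi).1, fun i hi => ?_,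
    fun i => ge_of_tendsto' (hlami i) fun k => (hres k).2.2.2.2.1 i,
    fun i => ge_of_tendsto' (hbetai i) fun k => (hres k).2.2.2.2.2.1 i,
    tendsto_nhds_unique (tendsto_finsetSum _ fun i _ => (hlami i).mul (hbetai i))
      (hzero fun k => (hres k).2.2.2.2.2.2)⟩
  · have h := sq_mul_add_rpow_eq_zero_of_tendsto hp (hwi i) hμ (hlami 0) (hzetai i) (hB i) (hadj i)
    simp_rw [mul_assoc, ← Finset.mul_sum]
    linear_combination h
  · linear_combination mul_add_rpow_eq_zero_of_tendsto hp (hwi i) hμ (hlami 0) (hD i) (hstat i)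
  · have hterm i : Tendsto (fun k => dphi p (μ k) (w k i) * zeta k i) l
        (𝓝 (p * (Real.sign (wstar i) * |wstar i| ^ (p - 1) * zetastar i))) := by
      rcases eq_or_ne (wstar i) 0 with hi | hi
      · simpa [hi] using (hvanish i hi).2
      · simpa [mul_assoc] using (tendsto_dphi (p := p) (hwi i) hμ hi).mul (hzetai i)
    have h := tendsto_nhds_unique ((tendsto_finsetSum _ fun i _ => hterm i).sub (hbetai 0))
      (hzero fun k => (hres k).2.1)
    rw [Finset.sum_filter_of_ne fun i _ hi => by contrapose! hi; simp [hi], Finset.mul_sum]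
    linear_combination h
  · exact sub_eq_zero.1 <| tendsto_nhds_unique ((tendsto_finsetSum _ fun j _ =>
      (((continuous_pd (hRC i) two_ne_zero j).tendsto _).comp hw).mul (hzetai j)).sub (hbetai i))
      (hzero fun k => (hres k).2.2.1 i hi)

end KKT

theorem accumulation_point_is_sbkkt_general {n r : ℕ} [NeZero r] (p : ℝ)
    (hp : 0 < p) (hp1 : p ≤ 1)
    (f g : (Fin n → ℝ) → ℝ) (R : Fin r → (Fin n → ℝ) → ℝ)
    (hfC : ContDiff ℝ 1 f) (hgC : ContDiff ℝ 2 g) (hRC : ∀ i, ContDiff ℝ 2 (R i))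
    (G : (Fin n → ℝ) → (Fin r → ℝ) → ℝ)
    (hG : ∀ w lam, G w lam = g w + ∑ i ∈ univ.filter (fun i : Fin r => i ≠ 0), lam i * R i w)
    (w : ℕ → Fin n → ℝ) (lam : ℕ → Fin r → ℝ)
    (zeta : ℕ → Fin n → ℝ) (beta : ℕ → Fin r → ℝ)
    (μ εhat : ℕ → ℝ)
    (hμpos : ∀ k, 0 < μ k) (hμ : Tendsto μ atTop (nhds 0))
    (hε : Tendsto εhat atTop (nhds 0))
    -- (wᵏ⁺¹, λᵏ⁺¹, ζᵏ⁺¹, βᵏ⁺¹) is an ε̂ₖ-approximate KKT point with parameter μₖ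
    (hKKT : ∀ k, ApproxKKT p f R G (w (k + 1)) (lam (k + 1)) (zeta (k + 1)) (beta (k + 1))
      (μ k) (εhat k))
    -- A1
    (hA1 : 0 < Filter.liminf (fun k => lam k 0) atTop)
    -- A2
    (hA2 : ∃ C : ℝ, ∀ k, (∀ i, |w k i| ≤ C) ∧ (∀ i, |lam k i| ≤ C))
    -- A3
    (hA3 : p = 1 → ∀ (wstar : Fin n → ℝ) (lamstar : Fin r → ℝ),
      MapClusterPt (wstar, lamstar) atTop (fun k => (w k, lam k)) →
      ∀ i, wstar i = 0 → lamstar 0 ≠ |pd (fun x => G x lamstar) wstar i|) :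
    ∀ (wstar : Fin n → ℝ) (lamstar : Fin r → ℝ)
      (zetastar : Fin n → ℝ) (betastar : Fin r → ℝ),
      MapClusterPt (wstar, lamstar, zetastar, betastar) atTop
        (fun k => (w k, lam k, zeta k, beta k)) →
      -- (i)  W*² ∇f(w*) + H(w*, λ*) ζ* = 0
      (∀ i, (wstar i) ^ 2 * pd f wstar i
          + ((∑ j, (wstar i) ^ 2 * pd2 (fun x => G x lamstar) wstar i j * zetastar j)
            + lamstar 0 * p * (p - 1) * |wstar i| ^ p * zetastar i) = 0) ∧
      -- (ii)  W* ∇_w G(w*, λ̄*) + p λ₁* |w*|^p = 0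
      (∀ i, wstar i * pd (fun x => G x lamstar) wstar i
          + p * lamstar 0 * |wstar i| ^ p = 0) ∧
      -- (iii)
      ((p * ∑ i ∈ univ.filter (fun i => wstar i ≠ 0),
          Real.sign (wstar i) * |wstar i| ^ (p - 1) * zetastar i) = betastar 0) ∧
      -- (iv)
      (∀ i, wstar i = 0 → zetastar i = 0) ∧
      -- (v)
      (∀ i : Fin r, i ≠ 0 → (∑ j, pd (R i) wstar j * zetastar j) = betastar i) ∧
      -- (vi)
      ((∀ i, 0 ≤ lamstar i) ∧ (∀ i, 0 ≤ betastar i) ∧ (∑ i, lamstar i * betastar i) = 0) := by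
  intro wstar lamstar zetastar betastar hcl
  have hshift : MapClusterPt (wstar, lamstar, zetastar, betastar) atTop
      (fun k => (w (k + 1), lam (k + 1), zeta (k + 1), beta (k + 1))) := by
    rwa [MapClusterPt, ← map_add_atTop_eq_nat 1, Filter.map_map] at hcl
  obtain ⟨φ, hφ, hlim⟩ := hshift.tendsto_subseq
  have hlam := hlim.snd_nhds.fst_nhds
  have hbdd : IsBoundedUnder (· ≥ ·) atTop (fun k => lam k 0) :=
    let ⟨C, hC⟩ := hA2
    isBoundedUnder_of ⟨-C, fun k => neg_le_of_abs_le ((hC k).2 0)⟩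
  have hlam0 : 0 < lamstar 0 := hA1.trans_le <| liminf_le_of_tendsto_comp hbdd
    ((tendsto_add_atTop_nat 1).comp hφ.tendsto_atTop) (tendsto_pi_nhds.1 hlam 0)
  exact sbkkt_of_tendsto hp hp1 hfC hgC hRC hG (fun k => (hμpos _).ne')
    (hμ.comp hφ.tendsto_atTop) (hε.comp hφ.tendsto_atTop) (fun k => hKKT (φ k))
    hlim.fst_nhds hlam hlim.snd_nhds.snd_nhds.fst_nhds hlim.snd_nhds.snd_nhds.snd_nhds hlam0
    fun h1 => hA3 h1 wstar lamstar
      (hcl.continuousAt_comp (f := fun q => (q.1, q.2.1)) (by fun_prop))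

/-- Theorem 2: under Assumptions A1–A4, every accumulation point
`(w*, λ*, ζ*, β*)` of the sequence `{(wᵏ, λᵏ, ζᵏ, βᵏ)}` produced by the smoothing
method satisfies the SB-KKT conditions (i)–(vi). -/
theorem accumulation_point_is_sbkkt {n r : ℕ} [NeZero r] (p : ℝ)
    (hp : 0 < p) (hp1 : p ≤ 1)
    (f g : (Fin n → ℝ) → ℝ) (R : Fin r → (Fin n → ℝ) → ℝ)
    (hfC : ContDiff ℝ 1 f) (hgC : ContDiff ℝ 2 g) (hRC : ∀ i, ContDiff ℝ 2 (R i))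
    (G : (Fin n → ℝ) → (Fin r → ℝ) → ℝ)
    (hG : ∀ w lam, G w lam = g w + ∑ i ∈ univ.filter (fun i : Fin r => i ≠ 0), lam i * R i w)
    (w : ℕ → Fin n → ℝ) (lam : ℕ → Fin r → ℝ)
    (zeta : ℕ → Fin n → ℝ) (beta : ℕ → Fin r → ℝ)
    (μ εhat : ℕ → ℝ)
    (hμpos : ∀ k, 0 < μ k) (hμ : Tendsto μ atTop (nhds 0))
    (hεnonneg : ∀ k, 0 ≤ εhat k) (hε : Tendsto εhat atTop (nhds 0))
    -- (wᵏ⁺¹, λᵏ⁺¹, ζᵏ⁺¹, βᵏ⁺¹) is an ε̂ₖ-approximate KKT point with parameter μₖ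
    (hKKT : ∀ k, ApproxKKT p f R G (w (k + 1)) (lam (k + 1)) (zeta (k + 1)) (beta (k + 1))
      (μ k) (εhat k))
    -- A1
    (hA1 : 0 < Filter.liminf (fun k => lam k 0) atTop)
    -- A2
    (hA2 : ∃ C : ℝ, ∀ k, (∀ i, |w k i| ≤ C) ∧ (∀ i, |lam k i| ≤ C))
    -- A3
    (hA3 : p = 1 → ∀ (wstar : Fin n → ℝ) (lamstar : Fin r → ℝ),
      MapClusterPt (wstar, lamstar) atTop (fun k => (w k, lam k)) →
      ∀ i, wstar i = 0 → lamstar 0 ≠ |pd (fun x => G x lamstar) wstar i|)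
    -- A4
    (hA4 : ∀ (wstar : Fin n → ℝ) (lamstar : Fin r → ℝ),
      MapClusterPt (wstar, lamstar) atTop (fun k => (w k, lam k)) →
      LICQ p G wstar lamstar) :
    ∀ (wstar : Fin n → ℝ) (lamstar : Fin r → ℝ)
      (zetastar : Fin n → ℝ) (betastar : Fin r → ℝ),
      MapClusterPt (wstar, lamstar, zetastar, betastar) atTop
        (fun k => (w k, lam k, zeta k, beta k)) →
      -- (i)  W*² ∇f(w*) + H(w*, λ*) ζ* = 0
      (∀ i, (wstar i) ^ 2 * pd f wstar i
          + ((∑ j, (wstar i) ^ 2 * pd2 (fun x => G x lamstar) wstar i j * zetastar j)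
            + lamstar 0 * p * (p - 1) * |wstar i| ^ p * zetastar i) = 0) ∧
      -- (ii)  W* ∇_w G(w*, λ̄*) + p λ₁* |w*|^p = 0
      (∀ i, wstar i * pd (fun x => G x lamstar) wstar i
          + p * lamstar 0 * |wstar i| ^ p = 0) ∧
      -- (iii)
      ((p * ∑ i ∈ univ.filter (fun i => wstar i ≠ 0),
          Real.sign (wstar i) * |wstar i| ^ (p - 1) * zetastar i) = betastar 0) ∧
      -- (iv)
      (∀ i, wstar i = 0 → zetastar i = 0) ∧
      -- (v)
      (∀ i : Fin r, i ≠ 0 → (∑ j, pd (R i) wstar j * zetastar j) = betastar i) ∧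
      -- (vi)
      ((∀ i, 0 ≤ lamstar i) ∧ (∀ i, 0 ≤ betastar i) ∧ (∑ i, lamstar i * betastar i) = 0) :=
  accumulation_point_is_sbkkt_general p hp hp1 f g R hfC hgC hRC G hG w lam zeta beta μ εhat hμpos
    hμ hε hKKT hA1 hA2 hA3
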